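/- arXiv:2203.13913 — 6 statements merged into one kernel-verified Lean document; each statement's English description precedes it below -/
import Mathlib

section
/- The 1-dimensional Weisfeiler–Leman algorithm (color refinement) distinguishes any two non-isomorphic finite directed, labeled trees; i.e., if two rooted labeled trees receive the same stable coloring at their roots, then they are isomorphic. -/
/-- Finite rooted directed trees with node labels in `L` and edge labels in `E`
(children are grouped together with the label of the edge leading to them). -/
inductive LTree (L E : Type) : Type
  | node : L → List (E × LTree L E) → LTree L E

/-- The type of 1-WL (color refinement) colors after `i` rounds: the initial color is
the node label; thereafter a color is the previous color of the node paired with the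
multiset of (edge label, previous color) pairs of its out-neighbors. -/
def WLColor (L E : Type) : ℕ → Type
  | 0 => L
  | i + 1 => WLColor L E i × Multiset (E × WLColor L E i)

/-- The color-refinement coloring after `i` rounds, at the root of a tree. -/
def wlCol {L E : Type} : (i : ℕ) → LTree L E → WLColor L E i
  | 0, .node l _ => l
  | i + 1, .node l cs => (wlCol i (.node l cs), ↑(cs.map fun c => (c.1, wlCol i c.2)))

/-- Isomorphism of rooted, labeled directed trees: roots have equal labels and the
children correspond under a bijection preserving edge labels and (recursively)
isomorphism of subtrees. -/
inductive LTree.Iso {L E : Type} : LTree L E → LTree L E → Prop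
  | node (l : L) (cs ds : List (E × LTree L E)) (σ : Fin cs.length ≃ Fin ds.length)
      (hlab : ∀ i : Fin cs.length, (cs.get i).1 = (ds.get (σ i)).1)
      (hiso : ∀ i : Fin cs.length, LTree.Iso (cs.get i).2 (ds.get (σ i)).2) :
      LTree.Iso (.node l cs) (.node l ds)

/-!
The round-`(i + 1)` color of a root records its label and the multiset of pairs
(edge label, round-`i` color of the child). So if two trees of height at most `i + 1` agree at
round `i + 1`, their children can be matched bijectively with equal edge labels and equal
round-`i` colors, and by induction on `i` the matched subtrees are isomorphic. Trees of height
at most `i` are thus determined up to isomorphism by their round-`i` color.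
-/

theorem List.Perm.exists_equiv_get_map {α β : Type*} {f : α → β} {xs ys : List α}
    (h : (xs.map f).Perm (ys.map f)) :
    ∃ σ : Fin xs.length ≃ Fin ys.length, ∀ i, f (xs.get i) = f (ys.get (σ i)) := by
  classical
  let σ := Equiv.ofBijective h.idxBij ⟨h.idxBij_injective, h.idxBij_surjective⟩
  refine ⟨(finCongr (List.length_map _).symm).trans (σ.trans (finCongr (List.length_map _))),
    fun i => ?_⟩
  have := h.getElem_idxBij_eq_getElem (Fin.cast (List.length_map _).symm i)
  simp only [List.getElem_map, Fin.val_cast] at this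
  exact this.symm

section

variable {L E : Type}

namespace LTree

def height : LTree L E → ℕ
  | node _ cs => (cs.map fun c => c.2.height).foldr max 0 + 1
decreasing_by
  have := List.sizeOf_lt_of_mem ‹c ∈ cs›
  cases c
  simp only [Prod.mk.sizeOf_spec, node.sizeOf_spec] at this ⊢
  omega

theorem height_pos (t : LTree L E) : 0 < t.height := by
  cases t
  rw [height]
  omega

theorem height_lt_of_mem {l : L} {cs : List (E × LTree L E)} {c : E × LTree L E} (hc : c ∈ cs) :
    c.2.height < (node l cs).height := by
  rw [height, Nat.lt_succ_iff]
  exact List.le_max_of_le (List.mem_map_of_mem hc) le_rfl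

end LTree

theorem wlCol_succ_fst (i : ℕ) (t : LTree L E) : (wlCol (i + 1) t).1 = wlCol i t := by
  cases t
  rfl

theorem wlCol_eq_of_le {i j : ℕ} {t u : LTree L E} (hji : j ≤ i) (h : wlCol i t = wlCol i u) :
    wlCol j t = wlCol j u := by
  induction i, hji using Nat.le_induction with
  | base => exact h
  | succ k _ ih => exact ih (by rw [← wlCol_succ_fst, h, wlCol_succ_fst])

theorem LTree.Iso.of_wlCol_eq : ∀ {i : ℕ} {t u : LTree L E}, t.height ≤ i → u.height ≤ i →
    wlCol i t = wlCol i u → t.Iso u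
  | 0, t, _, ht, _, _ => absurd ht t.height_pos.not_ge
  | i + 1, .node l cs, .node m ds, ht, hu, h => by
    obtain rfl : l = m := wlCol_eq_of_le (Nat.zero_le _) h
    have hchildren :
        (cs.map fun c => (c.1, wlCol i c.2)).Perm (ds.map fun c => (c.1, wlCol i c.2)) :=
      Multiset.coe_eq_coe.1 (congrArg Prod.snd h)
    obtain ⟨σ, hσ⟩ := hchildren.exists_equiv_get_map
    refine .node l cs ds σ (fun j => (Prod.ext_iff.1 (hσ j)).1) fun j => ?_
    refine of_wlCol_eq ?_ ?_ (Prod.ext_iff.1 (hσ j)).2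
    · exact Nat.le_of_lt_succ ((height_lt_of_mem (List.get_mem cs j)).trans_le ht)
    · exact Nat.le_of_lt_succ ((height_lt_of_mem (List.get_mem ds (σ j))).trans_le hu)

end

/-- Color refinement (the 1-dimensional Weisfeiler–Leman algorithm)
distinguishes non-isomorphic finite directed labeled trees: if two rooted labeled trees
receive the same stable coloring at their roots (equivalently, the same color at every
round), then they are isomorphic. -/
theorem colorRefinement_distinguishes_trees {L E : Type} (t u : LTree L E)
    (h : ∀ i : ℕ, wlCol i t = wlCol i u) : LTree.Iso t u :=
  .of_wlCol_eq (le_max_left _ _) (le_max_right _ _) (h _)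
end

section
/- For k ≥ 2, in the cycle C_m with m ≥ k+2, every k-tuple of vertices inducing a connected subgraph has, for each index j ∈ [k], exactly two local j-neighbors in V^k (corresponding to the two neighbors of the j-th vertex), and the number of these local j-neighbors that again induce a connected subgraph depends only on the isomorphism type of the labeled induced subgraph of the tuple. -/
/-! A connected vertex set of size `t ≤ m - 2` in the cycle `C_m` is an arc
`a, a + 1, …, a + t - 1`. If the entry `v j` occurs twice in the tuple, replacing it by either
neighbour just adds a vertex adjacent to the range, so both local `j`-neighbours stay connected.
Otherwise the range loses `v j` and gains a neighbour `x` of it. This is again an arc when `v j` is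
an end of the arc and `x` the inner neighbour; in every other case the new set avoids `v j` and one
further vertex but meets both arcs between them, so it is disconnected. Hence the count is `2`, `1`
or `0` according to whether `v j` is repeated and whether it has two distinct neighbours among the
entries, and the atomic type determines both. -/

open SimpleGraph Function

/-- A tuple induces a connected subgraph. -/
def InducesConnected {V : Type*} (G : SimpleGraph V) {m : ℕ} (v : Fin m → V) : Prop :=
  (G.induce (Set.range v)).Connected

/-- Two `k`-tuples have the same isomorphism (atomic) type: the map `v i ↦ w i`
preserves equalities and adjacencies of entries (i.e. induces an isomorphism of the
labeled induced subgraphs). -/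
def SameAtomicType {V W : Type*} (G : SimpleGraph V) (H : SimpleGraph W) {k : ℕ}
    (v : Fin k → V) (w : Fin k → W) : Prop :=
  ∀ i j : Fin k, (v i = v j ↔ w i = w j) ∧ (G.Adj (v i) (v j) ↔ H.Adj (w i) (w j))

open Fin.NatCast Fin.CommRing

section Update
variable {ι α : Type*} [DecidableEq ι] {v : ι → α} {j : ι}

theorem Set.range_update_of_exists_ne (h : ∃ i ≠ j, v i = v j) (x : α) :
    Set.range (update v j x) = insert x (Set.range v) := by
  obtain ⟨i, hij, hi⟩ := h
  ext y
  simp only [Set.mem_range, Set.mem_insert_iff]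
  constructor
  · rintro ⟨l, rfl⟩
    by_cases hl : l = j
    · subst hl; simp
    · exact Or.inr ⟨l, (update_of_ne hl x v).symm⟩
  · rintro (rfl | ⟨l, rfl⟩)
    · exact ⟨j, update_self j y v⟩
    · by_cases hl : l = j
      · subst hl; exact ⟨i, by rw [update_of_ne hij, hi]⟩
      · exact ⟨l, update_of_ne hl x v⟩

theorem Set.range_update_of_forall_ne (h : ∀ i ≠ j, v i ≠ v j) (x : α) :
    Set.range (update v j x) = insert x (Set.range v \ {v j}) := by
  ext y
  simp only [Set.mem_range, Set.mem_insert_iff, Set.mem_sdiff, Set.mem_singleton_iff]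
  constructor
  · rintro ⟨l, rfl⟩
    by_cases hl : l = j
    · subst hl; simp
    · rw [update_of_ne hl]; exact Or.inr ⟨⟨l, rfl⟩, h l hl⟩
  · rintro (rfl | ⟨⟨l, rfl⟩, hl⟩)
    · exact ⟨j, update_self j _ v⟩
    · exact ⟨l, update_of_ne (by rintro rfl; exact hl rfl) x v⟩

end Update

theorem InducesConnected.update_of_adj {V : Type*} {G : SimpleGraph V} {k : ℕ} {v : Fin k → V}
    {j : Fin k} {x : V} (hv : InducesConnected G v) (hrep : ∃ i ≠ j, v i = v j)
    (hx : G.Adj (v j) x) : InducesConnected G (update v j x) := by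
  rw [InducesConnected, Set.range_update_of_exists_ne hrep, Set.insert_eq, Set.union_comm]
  refine connected_induce_union hv.preconnected ?_ (Set.mem_range_self j) rfl hx
  rw [induce_singleton_eq_top]
  exact preconnected_top

namespace SameAtomicType
variable {V W : Type*} {G : SimpleGraph V} {H : SimpleGraph W} {k : ℕ} {v : Fin k → V}
  {w : Fin k → W}

theorem exists_ne_eq_iff (h : SameAtomicType G H v w) (j : Fin k) :
    (∃ i ≠ j, v i = v j) ↔ ∃ i ≠ j, w i = w j :=
  exists_congr fun i => and_congr_right fun _ => (h i j).1

theorem one_lt_ncard_neighborSet_inter_range_iff [Finite V] [Finite W]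
    (h : SameAtomicType G H v w) (j : Fin k) :
    1 < (G.neighborSet (v j) ∩ Set.range v).ncard ↔
      1 < (H.neighborSet (w j) ∩ Set.range w).ncard := by
  rw [Set.one_lt_ncard_iff, Set.one_lt_ncard_iff]
  constructor
  · rintro ⟨_, _, ⟨h₁, i₁, rfl⟩, ⟨h₂, i₂, rfl⟩, hne⟩
    exact ⟨w i₁, w i₂, ⟨(h j i₁).2.mp h₁, i₁, rfl⟩, ⟨(h j i₂).2.mp h₂, i₂, rfl⟩,
      fun e => hne ((h i₁ i₂).1.mpr e)⟩
  · rintro ⟨_, _, ⟨h₁, i₁, rfl⟩, ⟨h₂, i₂, rfl⟩, hne⟩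
    exact ⟨v i₁, v i₂, ⟨(h j i₁).2.mpr h₁, i₁, rfl⟩, ⟨(h j i₂).2.mpr h₂, i₂, rfl⟩,
      fun e => hne ((h i₁ i₂).1.mp e)⟩

end SameAtomicType

section CycleGraph
variable {m : ℕ}

def cyclePos (a x : Fin m) : ℕ := (x - a).val

theorem cyclePos_lt (a x : Fin m) : cyclePos a x < m := (x - a).isLt

def cycleArc (a : Fin m) (t : ℕ) : Set (Fin m) := {x | cyclePos a x < t}

theorem mem_cycleArc {a x : Fin m} {t : ℕ} : x ∈ cycleArc a t ↔ cyclePos a x < t := Iff.rfl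

variable [NeZero m]

theorem ncard_neighborSet_cycleGraph (hm : 3 ≤ m) (u : Fin m) :
    ((cycleGraph m).neighborSet u).ncard = 2 := by
  obtain ⟨n, rfl⟩ : ∃ n, m = n + 3 := ⟨m - 3, by omega⟩
  rw [← coe_neighborFinset, Set.ncard_coe_finset, card_neighborFinset_eq_degree,
    cycleGraph_degree_three_le]

theorem cyclePos_injective (a : Fin m) : Injective (cyclePos a) := fun _ _ h =>
  sub_left_injective (Fin.ext h)

theorem cyclePos_self (a : Fin m) : cyclePos a a = 0 := by simp [cyclePos]

theorem cyclePos_add_natCast (a : Fin m) {n : ℕ} (hn : n < m) : cyclePos a (a + n) = n := by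
  rw [cyclePos, add_sub_cancel_left, Fin.val_cast_of_lt hn]

theorem eq_add_natCast_iff_cyclePos_eq {a x : Fin m} {n : ℕ} (hn : n < m) :
    x = a + n ↔ cyclePos a x = n :=
  ⟨fun h => h ▸ cyclePos_add_natCast a hn,
    fun h => cyclePos_injective a (h.trans (cyclePos_add_natCast a hn).symm)⟩

theorem cyclePos_sub_one (a : Fin m) : cyclePos a (a - 1) = m - 1 := by
  obtain ⟨n, rfl⟩ : ∃ n, m = n + 1 := ⟨m - 1, by have := NeZero.ne m; omega⟩
  rw [cyclePos, sub_sub_cancel_left, Fin.coe_neg_one, Nat.add_sub_cancel]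

theorem cyclePos_add_one (hm : 2 ≤ m) {a x : Fin m} (hx : x ≠ a) :
    cyclePos (a + 1) x + 1 = cyclePos a x := by
  have h1 : (1 : Fin m).val = 1 := by rw [Fin.val_one']; exact Nat.mod_eq_of_lt hm
  have hpos : 1 ≤ x - a := by
    rw [Fin.le_def, h1, Nat.one_le_iff_ne_zero, Ne, Fin.val_eq_zero_iff, sub_eq_zero]
    exact hx
  rw [cyclePos, cyclePos, sub_add_eq_sub_sub, Fin.coe_sub_iff_le.mpr hpos, h1]
  rw [Fin.le_def, h1] at hpos
  omega

theorem cycleGraph_adj_iff_cyclePos (hm : 2 ≤ m) (a x y : Fin m) :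
    (cycleGraph m).Adj x y ↔
      cyclePos a x + 1 = cyclePos a y ∨ cyclePos a y + 1 = cyclePos a x ∨
        (cyclePos a x = 0 ∧ cyclePos a y = m - 1) ∨
        (cyclePos a y = 0 ∧ cyclePos a x = m - 1) := by
  have key (u w : Fin m) : (u - w).val = 1 ↔ w.val + 1 = u.val ∨ (u.val = 0 ∧ w.val = m - 1) := by
    have := u.isLt
    have := w.isLt
    rcases le_or_gt w u with h | h
    · rw [Fin.coe_sub_iff_le.mpr h]; rw [Fin.le_def] at h; omega
    · rw [Fin.coe_sub_iff_lt.mpr h]; rw [Fin.lt_def] at h; omega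
  rw [cycleGraph_adj', show x - y = (x - a) - (y - a) by abel,
    show y - x = (y - a) - (x - a) by abel, key, key]
  unfold cyclePos
  omega

theorem mem_insert_cycleArc_diff_iff {a x y z : Fin m} {t : ℕ} :
    z ∈ insert x (cycleArc a t \ {y}) ↔
      z = x ∨ (cyclePos a z < t ∧ cyclePos a z ≠ cyclePos a y) := by
  simp [mem_cycleArc, (cyclePos_injective a).ne_iff]

theorem cycleArc_one (a : Fin m) : cycleArc a 1 = {a} := by
  ext x
  rw [mem_cycleArc, Nat.lt_one_iff, Set.mem_singleton_iff, ← cyclePos_self a,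
    (cyclePos_injective a).eq_iff]

theorem cycleArc_succ (a : Fin m) {t : ℕ} (ht : t < m) :
    cycleArc a (t + 1) = cycleArc a t ∪ {a + (t : Fin m)} := by
  ext x
  rw [Set.mem_union, Set.mem_singleton_iff, mem_cycleArc, mem_cycleArc,
    eq_add_natCast_iff_cyclePos_eq ht]
  omega

theorem cycleArc_diff_self (a : Fin m) {t : ℕ} (ht : t < m) :
    cycleArc a (t + 1) \ {a} = cycleArc (a + 1) t := by
  ext x
  rw [Set.mem_sdiff, Set.mem_singleton_iff, mem_cycleArc, mem_cycleArc]
  by_cases hx : x = a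
  · subst hx
    have := cyclePos_sub_one (x + 1)
    rw [add_sub_cancel_right] at this
    omega
  · have := cyclePos_add_one (by omega) hx
    simp only [hx, not_false_eq_true, and_true]
    omega

theorem cycleArc_diff_of_cyclePos_add_one_eq {a y : Fin m} {t : ℕ}
    (hy : cyclePos a y + 1 = t) :
    cycleArc a t \ {y} = cycleArc a (t - 1) := by
  ext x
  rw [Set.mem_sdiff, Set.mem_singleton_iff, mem_cycleArc, mem_cycleArc,
    ← (cyclePos_injective a).eq_iff (a := x)]
  omega

theorem ncard_cycleArc (a : Fin m) {t : ℕ} (ht : t ≤ m) : (cycleArc a t).ncard = t := by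
  have himage : cyclePos a '' cycleArc a t = Set.Iio t := by
    ext n
    refine ⟨fun ⟨x, hx, hxn⟩ => hxn ▸ hx, fun hn => ?_⟩
    have hn : n < t := hn
    exact ⟨a + (n : Fin m), by rwa [mem_cycleArc, cyclePos_add_natCast a (by omega)],
      cyclePos_add_natCast a (by omega)⟩
  rw [← Set.ncard_image_of_injective _ (cyclePos_injective a), himage, Set.ncard_Iio_nat]

theorem cycleArc_connected (hm : 2 ≤ m) (a : Fin m) {t : ℕ} (ht : 0 < t) (htm : t ≤ m) :
    ((cycleGraph m).induce (cycleArc a t)).Connected := by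
  induction t, ht using Nat.le_induction with
  | base => rw [cycleArc_one, induce_singleton_eq_top]; exact connected_top
  | succ t ht ih =>
    rw [cycleArc_succ a (by omega)]
    refine connected_induce_union (ih (by omega)).preconnected ?_
      (v := a + ((t - 1 : ℕ) : Fin m)) ?_ rfl ?_
    · rw [induce_singleton_eq_top]; exact preconnected_top
    · rw [mem_cycleArc, cyclePos_add_natCast a (by omega)]; omega
    · rw [cycleGraph_adj_iff_cyclePos hm a, cyclePos_add_natCast a (by omega),
        cyclePos_add_natCast a (by omega)]
      omega

/-- A vertex set avoiding the two vertices at positions `c₁ < c₂` (counted from `a`) but meeting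
both arcs between them is disconnected. -/
theorem not_connected_induce_of_separated (hm : 2 ≤ m) (a : Fin m) {T : Set (Fin m)}
    {c₁ c₂ : ℕ} (hc₂ : c₂ < m) (hT : ∀ y ∈ T, cyclePos a y ≠ c₁ ∧ cyclePos a y ≠ c₂)
    {u w : Fin m} (hu : u ∈ T) (hw : w ∈ T) (hu' : c₁ < cyclePos a u ∧ cyclePos a u < c₂)
    (hw' : cyclePos a w < c₁ ∨ c₂ < cyclePos a w) :
    ¬ ((cycleGraph m).induce T).Connected := by
  intro hconn
  obtain ⟨p⟩ := hconn.preconnected ⟨u, hu⟩ ⟨w, hw⟩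
  obtain ⟨d, -, hd₁, hd₂⟩ :=
    p.exists_boundary_dart {y | c₁ < cyclePos a y ∧ cyclePos a y < c₂} hu' (by simp; omega)
  have hadj : (cycleGraph m).Adj d.fst d.snd := d.adj
  rw [cycleGraph_adj_iff_cyclePos hm a] at hadj
  have := hT _ d.fst.2
  have := hT _ d.snd.2
  have := cyclePos_lt a d.snd
  simp only [Set.mem_ofPred_eq] at hd₁ hd₂
  omega

theorem exists_eq_cycleArc_of_connected (hm : 2 ≤ m) {S : Set (Fin m)}
    (hS : ((cycleGraph m).induce S).Connected) (hSu : S ≠ Set.univ) :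
    ∃ a t, t < m ∧ S = cycleArc a t := by
  classical
  obtain ⟨z, hz⟩ := (Set.ne_univ_iff_exists_notMem S).mp hSu
  -- `S` is the arc from a vertex `a` whose predecessor is missing up to the first gap after `a`:
  -- a vertex beyond that gap would be separated from `a` by the gap and by `a - 1`.
  obtain ⟨a, ha, ha'⟩ : ∃ a ∈ S, a - 1 ∉ S := by
    obtain ⟨⟨s, hs⟩⟩ := hS.nonempty
    by_contra! h
    have hsub : ∀ n : ℕ, s - n ∈ S := by
      intro n
      induction n with
      | zero => simpa using hs
      | succ n ih => simpa [sub_add_eq_sub_sub] using h _ ih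
    exact hz (by simpa using hsub (s - z).val)
  have hex : ∃ n : ℕ, a + (n : Fin m) ∉ S := ⟨(z - a).val, by simpa using hz⟩
  have hfind : Nat.find hex ≤ (z - a).val := Nat.find_min' hex (by simpa using hz)
  have hfind₀ : 0 < Nat.find hex := Nat.pos_of_ne_zero fun h0 =>
    Nat.find_spec hex (by simpa [h0] using ha)
  have hT : ∀ y ∈ S, cyclePos a y ≠ Nat.find hex ∧ cyclePos a y ≠ m - 1 := by
    refine fun y hy => ⟨fun h => Nat.find_spec hex ?_, fun h => ha' ?_⟩
    · rwa [(eq_add_natCast_iff_cyclePos_eq (by have := (z - a).isLt; omega)).mpr h] at hy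
    · rwa [cyclePos_injective a (h.trans (cyclePos_sub_one a).symm)] at hy
  refine ⟨a, Nat.find hex, by have := (z - a).isLt; omega,
    Set.ext fun x => ⟨fun hx => ?_, fun hx => ?_⟩⟩
  · by_contra hxt
    have := hT x hx
    have := cyclePos_lt a x
    refine not_connected_induce_of_separated hm a (by omega) hT hx ha ?_ ?_ hS
    · rw [mem_cycleArc] at hxt; omega
    · rw [cyclePos_self]; omega
  · have := Nat.find_min hex hx
    rwa [not_not, ← (eq_add_natCast_iff_cyclePos_eq (cyclePos_lt a x)).mpr rfl] at this

theorem one_lt_ncard_neighborSet_inter_cycleArc_iff {a y : Fin m} {t : ℕ} (htm : t < m)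
    (hy : y ∈ cycleArc a t) :
    1 < ((cycleGraph m).neighborSet y ∩ cycleArc a t).ncard ↔
      0 < cyclePos a y ∧ cyclePos a y + 1 < t := by
  have hm : 2 ≤ m := by rw [mem_cycleArc] at hy; omega
  rw [Set.one_lt_ncard_iff]
  constructor
  · rintro ⟨x₁, x₂, ⟨h₁, hx₁⟩, ⟨h₂, hx₂⟩, hne⟩
    rw [mem_neighborSet, cycleGraph_adj_iff_cyclePos hm a] at h₁ h₂
    have := (cyclePos_injective a).ne hne
    rw [mem_cycleArc] at hx₁ hx₂ hy
    omega
  · rintro ⟨h₀, ht⟩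
    refine ⟨a + ((cyclePos a y - 1 : ℕ) : Fin m), a + ((cyclePos a y + 1 : ℕ) : Fin m),
      ⟨?_, ?_⟩, ⟨?_, ?_⟩, ?_⟩ <;>
    simp only [mem_neighborSet, cycleGraph_adj_iff_cyclePos hm a, mem_cycleArc, ne_eq,
      eq_add_natCast_iff_cyclePos_eq (by omega : cyclePos a y + 1 < m),
      cyclePos_add_natCast a (by omega : cyclePos a y - 1 < m),
      cyclePos_add_natCast a (by omega : cyclePos a y + 1 < m), true_or] <;>
    omega

theorem not_connected_insert_cycleArc_diff_of_interior {a x y : Fin m} {t : ℕ} (htm : t + 2 ≤ m)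
    (hy₀ : 0 < cyclePos a y) (hyt : cyclePos a y + 1 < t) (hx : (cycleGraph m).Adj y x) :
    ¬ ((cycleGraph m).induce (insert x (cycleArc a t \ {y}))).Connected := by
  have hm : 2 ≤ m := by omega
  have hpos := cyclePos_add_natCast a (by omega : cyclePos a y + 1 < m)
  rw [cycleGraph_adj_iff_cyclePos hm a] at hx
  refine not_connected_induce_of_separated hm a (c₁ := cyclePos a y) (c₂ := m - 1) (by omega)
    ?_ (u := a + ((cyclePos a y + 1 : ℕ) : Fin m)) (w := a) ?_ ?_ ?_ ?_
  · simp only [mem_insert_cycleArc_diff_iff]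
    rintro z (rfl | hz) <;> omega
  · rw [mem_insert_cycleArc_diff_iff, hpos]; omega
  · rw [mem_insert_cycleArc_diff_iff, cyclePos_self]; omega
  · rw [hpos]; omega
  · rw [cyclePos_self]; omega

theorem setOf_adj_connected_insert_cycleArc_diff_self (a : Fin m) {t : ℕ} (ht : 2 ≤ t)
    (htm : t + 2 ≤ m) :
    {x | (cycleGraph m).Adj a x ∧
        ((cycleGraph m).induce (insert x (cycleArc a t \ {a}))).Connected} = {a + 1} := by
  have hm : 2 ≤ m := by omega
  have hpos : cyclePos a (a + 1) = 1 := by simpa using cyclePos_add_natCast a (n := 1) (by omega)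
  ext x
  simp only [Set.mem_ofPred_eq, Set.mem_singleton_iff]
  constructor
  · rintro ⟨hx, hconn⟩
    rw [cycleGraph_adj_iff_cyclePos hm a, cyclePos_self] at hx
    by_contra hne
    have : cyclePos a x ≠ 1 := fun h => hne (cyclePos_injective a (h.trans hpos.symm))
    refine not_connected_induce_of_separated hm a (c₁ := 0) (c₂ := t) (by omega) ?_
      (u := a + 1) (w := x) ?_ ?_ ?_ ?_ hconn
    · simp only [mem_insert_cycleArc_diff_iff, cyclePos_self]
      rintro z (rfl | hz) <;> omega
    · rw [mem_insert_cycleArc_diff_iff, hpos, cyclePos_self]; omega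
    · exact Set.mem_insert x _
    · rw [hpos]; omega
    · omega
  · rintro rfl
    refine ⟨by rw [cycleGraph_adj_iff_cyclePos hm a, hpos, cyclePos_self]; omega, ?_⟩
    have hmem : a + 1 ∈ cycleArc a t \ {a} := by
      rw [Set.mem_sdiff, mem_cycleArc, hpos, Set.mem_singleton_iff]
      exact ⟨by omega, fun h => by simp [h, cyclePos_self] at hpos⟩
    obtain ⟨s, rfl⟩ : ∃ s, t = s + 1 := ⟨t - 1, by omega⟩
    rw [Set.insert_eq_of_mem hmem, cycleArc_diff_self a (by omega)]
    exact cycleArc_connected hm (a + 1) (by omega) (by omega)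

theorem setOf_adj_connected_insert_cycleArc_diff_last {a y : Fin m} {t : ℕ} (ht : 2 ≤ t)
    (htm : t + 2 ≤ m) (hy : cyclePos a y + 1 = t) :
    {x | (cycleGraph m).Adj y x ∧
        ((cycleGraph m).induce (insert x (cycleArc a t \ {y}))).Connected} =
      {a + ((t - 2 : ℕ) : Fin m)} := by
  have hm : 2 ≤ m := by omega
  have hpos := cyclePos_add_natCast a (by omega : t - 2 < m)
  ext x
  simp only [Set.mem_ofPred_eq, Set.mem_singleton_iff]
  constructor
  · rintro ⟨hx, hconn⟩
    rw [cycleGraph_adj_iff_cyclePos hm a] at hx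
    rw [eq_add_natCast_iff_cyclePos_eq (by omega)]
    by_contra hne
    refine not_connected_induce_of_separated hm a (c₁ := t - 1) (c₂ := m - 1) (by omega) ?_
      (u := x) (w := a) (Set.mem_insert x _) ?_ ?_ ?_ hconn
    · simp only [mem_insert_cycleArc_diff_iff]
      rintro z (rfl | hz) <;> omega
    · rw [mem_insert_cycleArc_diff_iff, cyclePos_self]; omega
    · omega
    · rw [cyclePos_self]; omega
  · rintro rfl
    refine ⟨by rw [cycleGraph_adj_iff_cyclePos hm a, hpos]; omega, ?_⟩
    have hmem : a + ((t - 2 : ℕ) : Fin m) ∈ cycleArc a t \ {y} := by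
      rw [Set.mem_sdiff, mem_cycleArc, hpos, Set.mem_singleton_iff]
      exact ⟨by omega, fun h => by rw [← h, hpos] at hy; omega⟩
    rw [Set.insert_eq_of_mem hmem, cycleArc_diff_of_cyclePos_add_one_eq hy]
    exact cycleArc_connected hm a (by omega) (by omega)

theorem ncard_setOf_adj_connected_insert_diff (hm : 2 ≤ m) {S : Set (Fin m)} {y : Fin m}
    (hS : ((cycleGraph m).induce S).Connected) (hS₂ : 2 ≤ S.ncard) (hSm : S.ncard + 2 ≤ m)
    (hy : y ∈ S) :
    {x | (cycleGraph m).Adj y x ∧ ((cycleGraph m).induce (insert x (S \ {y}))).Connected}.ncard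
      = if 1 < ((cycleGraph m).neighborSet y ∩ S).ncard then 0 else 1 := by
  have hSu : S ≠ Set.univ := by
    rintro rfl
    rw [Set.ncard_univ, Nat.card_eq_fintype_card, Fintype.card_fin] at hSm
    omega
  obtain ⟨a, t, htm, rfl⟩ := exists_eq_cycleArc_of_connected hm hS hSu
  rw [ncard_cycleArc a htm.le] at hS₂ hSm
  split_ifs with hint <;> rw [one_lt_ncard_neighborSet_inter_cycleArc_iff htm hy] at hint
  · rw [Set.ncard_eq_zero]
    exact Set.eq_empty_of_forall_notMem fun x ⟨hx, hconn⟩ =>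
      not_connected_insert_cycleArc_diff_of_interior hSm hint.1 hint.2 hx hconn
  · rw [mem_cycleArc] at hy
    rcases (by omega : cyclePos a y = 0 ∨ cyclePos a y + 1 = t) with h₀ | hlast
    · obtain rfl : y = a := cyclePos_injective a (h₀.trans (cyclePos_self a).symm)
      rw [setOf_adj_connected_insert_cycleArc_diff_self y hS₂ hSm, Set.ncard_singleton]
    · rw [setOf_adj_connected_insert_cycleArc_diff_last hS₂ hSm hlast, Set.ncard_singleton]

end CycleGraph

theorem ncard_setOf_adj_inducesConnected_update {k m : ℕ} [NeZero m] (hk : 2 ≤ k)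
    (hkm : k + 2 ≤ m) {v : Fin k → Fin m} (hv : InducesConnected (cycleGraph m) v) (j : Fin k) :
    {x | (cycleGraph m).Adj (v j) x ∧ InducesConnected (cycleGraph m) (update v j x)}.ncard =
      if ∃ i ≠ j, v i = v j then 2
      else if 1 < ((cycleGraph m).neighborSet (v j) ∩ Set.range v).ncard then 0 else 1 := by
  by_cases hrep : ∃ i ≠ j, v i = v j
  · have hgood :
        {x | (cycleGraph m).Adj (v j) x ∧ InducesConnected (cycleGraph m) (update v j x)} =
          (cycleGraph m).neighborSet (v j) :=
      Set.ext fun x => ⟨And.left, fun hx => ⟨hx, hv.update_of_adj hrep hx⟩⟩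
    rw [if_pos hrep, hgood, ncard_neighborSet_cycleGraph (by omega)]
  · push Not at hrep
    have hrange : (Set.range v).ncard ≤ k := by
      have := Finite.card_range_le v
      rwa [Nat.card_coe_set_eq, Nat.card_eq_fintype_card, Fintype.card_fin] at this
    have hrange₂ : 2 ≤ (Set.range v).ncard := by
      have := Fin.nontrivial_iff_two_le.mpr hk
      obtain ⟨i, hi⟩ := exists_ne j
      exact (Set.one_lt_ncard_iff).mpr ⟨v i, v j, ⟨i, rfl⟩, ⟨j, rfl⟩, hrep i hi⟩
    have hupdate : ∀ x, InducesConnected (cycleGraph m) (update v j x) ↔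
        ((cycleGraph m).induce (insert x (Set.range v \ {v j}))).Connected := fun x => by
      rw [InducesConnected, Set.range_update_of_forall_ne hrep]
    simp only [hupdate]
    rw [if_neg (by simpa using hrep),
      ncard_setOf_adj_connected_insert_diff (by omega) hv hrange₂ (by omega) ⟨j, rfl⟩]

/-- In the cycle `C_m` with `m ≥ k + 2` (`k ≥ 2`), every `k`-tuple
inducing a connected subgraph has, for each coordinate `j`, exactly two local
`j`-neighbors (one per neighbor of the `j`-th entry), and the number of these local
`j`-neighbors which again induce a connected subgraph depends only on the atomic
(isomorphism) type of the tuple. -/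
theorem cycle_local_neighbors_atomic_type (k m : ℕ) (hk : 2 ≤ k) (hm : k + 2 ≤ m) :
    (∀ v : Fin k → Fin m, InducesConnected (cycleGraph m) v →
      ∀ j : Fin k,
        Set.ncard {x : Fin m | (cycleGraph m).Adj (v j) x} = 2) ∧
    (∀ v w : Fin k → Fin m, InducesConnected (cycleGraph m) v →
      InducesConnected (cycleGraph m) w →
      SameAtomicType (cycleGraph m) (cycleGraph m) v w →
      ∀ j : Fin k,
        Set.ncard {x : Fin m | (cycleGraph m).Adj (v j) x ∧
            InducesConnected (cycleGraph m) (Function.update v j x)} =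
        Set.ncard {x : Fin m | (cycleGraph m).Adj (w j) x ∧
            InducesConnected (cycleGraph m) (Function.update w j x)}) := by
  have : NeZero m := ⟨by omega⟩
  refine ⟨fun v _ j => ncard_neighborSet_cycleGraph (by omega) (v j), fun v w hv hw hvw j => ?_⟩
  rw [ncard_setOf_adj_inducesConnected_update hk hm hv,
    ncard_setOf_adj_inducesConnected_update hk hm hw]
  simp only [hvw.exists_ne_eq_iff j, hvw.one_lt_ncard_neighborSet_inter_range_iff j]
end

section
/- For k ≥ 2, in the graph B_{k+2} (two cycles of length k+3 sharing one edge), every (k+1)-tuple with pairwise distinct entries inducing a connected subgraph has no local (k+1)-neighbor with pairwise distinct entries inducing a connected subgraph on k+1 distinct vertices such that the resulting tuple together with the replaced vertex covers a full cycle; in contrast, in A_{k+2} the tuple (a_1,…,a_{k+1}) along a (k+2)-cycle has a local (k+1)-neighbor whose entries are pairwise distinct. -/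
/-!
Every vertex of a cycle has two distinct neighbours on it, so a cycle through a vertex of degree 2
contains both neighbours of that vertex. In `B_{k+2}` every vertex except the chord endpoints
`0` and `k+2` has degree 2, and every cycle has a vertex other than these two; propagating along
its arm, the cycle contains a whole `(k+3)`-cycle of `B_{k+2}`. The new tuple together with the
replaced vertex has only `k+2` vertices. In `A_{k+2}` the path `0, …, k` can move its last entry
on to `k+1`.
-/

open SimpleGraph Function

/-- The graph `A_{k+2}`: two disjoint `(k+2)`-cycles, on vertices `0,…,k+1` and
`k+2,…,2k+3`, joined by the single edge `(k+1, k+2)`. -/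
def graphA (k : ℕ) : SimpleGraph (Fin (2 * (k + 2))) :=
  SimpleGraph.fromRel (fun a b =>
    (b.val = a.val + 1 ∧ b.val ≤ k + 1) ∨
    (a.val = 0 ∧ b.val = k + 1) ∨
    (b.val = a.val + 1 ∧ k + 2 ≤ a.val ∧ b.val ≤ 2 * k + 3) ∨
    (a.val = k + 2 ∧ b.val = 2 * k + 3) ∨
    (a.val = k + 1 ∧ b.val = k + 2))

/-- The graph `B_{k+2}`: two `(k+3)`-cycles sharing exactly one edge, realized as the
cycle `0,1,…,2k+3,0` together with the chord `(0, k+2)`. -/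
def graphB (k : ℕ) : SimpleGraph (Fin (2 * (k + 2))) :=
  SimpleGraph.fromRel (fun a b =>
    (b.val = a.val + 1 ∧ b.val ≤ 2 * k + 3) ∨
    (a.val = 0 ∧ b.val = 2 * k + 3) ∨
    (a.val = 0 ∧ b.val = k + 2))

/-- The set `S` is the vertex set of a cycle of the graph `G`. -/
def CoversCycle {V : Type*} (G : SimpleGraph V) (S : Set V) : Prop :=
  ∃ (a : V) (c : G.Walk a a), c.IsCycle ∧ {z | z ∈ c.support} = S

open Set

theorem Function.Injective.update_of_notMem_range {α β : Type*} [DecidableEq α] {v : α → β}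
    (hv : Injective v) {x : β} (hx : x ∉ range v) (i : α) : Injective (update v i x) := by
  intro a b h
  by_cases ha : a = i <;> by_cases hb : b = i
  · exact ha.trans hb.symm
  · subst ha; rw [update_self, update_of_ne hb] at h; exact absurd ⟨b, h.symm⟩ hx
  · subst hb; rw [update_self, update_of_ne ha] at h; exact absurd ⟨a, h⟩ hx
  · rw [update_of_ne ha, update_of_ne hb] at h; exact hv h

theorem ncard_range_update_union_singleton {β : Type*} {m : ℕ} {v : Fin m → β}
    (hv : Injective v) {i : Fin m} {x : β} (hx : x ≠ v i) (hu : Injective (update v i x)) :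
    (range (update v i x) ∪ {v i}).ncard = m + 1 := by
  have hvi : v i ∉ range (update v i x) := by
    rintro ⟨j, hj⟩
    rcases eq_or_ne j i with rfl | hji
    · exact hx (by simpa using hj)
    · exact hji (hv (by simpa [hji] using hj))
  rw [union_singleton, ncard_insert_of_notMem hvi, ncard_range_of_injective hu, Nat.card_fin]

theorem Nat.forall_mem_Icc_of_propagates {P : ℕ → Prop} {lo hi w : ℕ}
    (hstep : ∀ m, lo < m → m < hi → P m → P (m - 1) ∧ P (m + 1))
    (hlo : lo < w) (hhi : w < hi) (hw : P w) : ∀ m ∈ Icc lo hi, P m := by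
  have hup : ∀ m, w ≤ m → m ≤ hi → P m := by
    intro m hm
    induction m, hm using Nat.le_induction with
    | base => exact fun _ => hw
    | succ n hn ih => exact fun h => (hstep n (by omega) (by omega) (ih (by omega))).2
  have hdown : ∀ j, j ≤ w - lo → P (w - j) := by
    intro j
    induction j with
    | zero => exact fun _ => hw
    | succ j ih =>
      intro hj
      simpa [Nat.sub_sub] using (hstep (w - j) (by omega) (by omega) (ih (by omega))).1
  rintro m ⟨hm₁, hm₂⟩
  rcases le_total w m with h | h
  · exact hup m h hm₂
  · simpa [Nat.sub_sub_self h] using hdown (w - m) (by omega)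

namespace SimpleGraph

variable {V : Type*} {G : SimpleGraph V}

theorem Walk.IsCycle.exists_ne_adj_of_mem_support {a w : V} {c : G.Walk a a} (hc : c.IsCycle)
    (hw : w ∈ c.support) :
    ∃ x ∈ c.support, ∃ y ∈ c.support, x ≠ y ∧ G.Adj w x ∧ G.Adj w y := by
  obtain ⟨x, y, hxy, hN⟩ := Set.ncard_eq_two.mp (hc.ncard_neighborSet_toSubgraph_eq_two hw)
  have hx : c.toSubgraph.Adj w x := by simp [← Subgraph.mem_neighborSet, hN]
  have hy : c.toSubgraph.Adj w y := by simp [← Subgraph.mem_neighborSet, hN]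
  exact ⟨x, c.mem_verts_toSubgraph.mp hx.snd_mem, y, c.mem_verts_toSubgraph.mp hy.snd_mem,
    hxy, hx.adj_sub, hy.adj_sub⟩

theorem mem_of_neighborSet_subset_pair {S : Set V}
    (hS : ∀ a ∈ S, ∃ x ∈ S, ∃ y ∈ S, x ≠ y ∧ G.Adj a x ∧ G.Adj a y) {a p q : V} (ha : a ∈ S)
    (hN : G.neighborSet a ⊆ {p, q}) : p ∈ S ∧ q ∈ S := by
  obtain ⟨x, hx, y, hy, hxy, hax, hay⟩ := hS a ha
  have hx' : x = p ∨ x = q := hN hax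
  have hy' : y = p ∨ y = q := hN hay
  rcases hx' with rfl | rfl <;> rcases hy' with rfl | rfl <;> simp_all

theorem image_Icc_subset_of_neighborSet_subset {S : Set V}
    (hS : ∀ a ∈ S, ∃ x ∈ S, ∃ y ∈ S, x ≠ y ∧ G.Adj a x ∧ G.Adj a y) (f : ℕ → V) {lo hi w : ℕ}
    (hf : ∀ m, lo < m → m < hi → G.neighborSet (f m) ⊆ {f (m - 1), f (m + 1)})
    (hlo : lo < w) (hhi : w < hi) (hw : f w ∈ S) : f '' Icc lo hi ⊆ S := by
  rintro _ ⟨m, hm, rfl⟩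
  refine Nat.forall_mem_Icc_of_propagates (P := fun m => f m ∈ S) ?_ hlo hhi hw m hm
  exact fun m h₁ h₂ hm => mem_of_neighborSet_subset_pair hS hm (hf m h₁ h₂)

theorem induce_range_connected_of_adj_succ {m : ℕ} (f : Fin (m + 1) → V)
    (hf : ∀ i : Fin m, G.Adj (f i.castSucc) (f i.succ)) : (G.induce (range f)).Connected := by
  let u : Fin (m + 1) → range f := fun i => ⟨f i, i, rfl⟩
  have hreach : ∀ i, (G.induce (range f)).Reachable (u 0) (u i) :=
    Fin.induction .rfl fun i ih => ih.trans (Adj.reachable (by simpa [u] using hf i))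
  rw [connected_iff_exists_forall_reachable]
  exact ⟨u 0, fun ⟨_, i, hi⟩ => hi ▸ hreach i⟩

end SimpleGraph

/-- Vertex `m` of the outer cycle of `graphB k`, with `2 * (k + 2)` wrapping round to `0`: the two
`(k+3)`-cycles are the images of `Icc 0 (k + 2)` and `Icc (k + 2) (2 * (k + 2))`. -/
def cycleVertex (k m : ℕ) : Fin (2 * (k + 2)) :=
  if h : m < 2 * (k + 2) then ⟨m, h⟩ else ⟨0, by omega⟩

theorem val_cycleVertex (k m : ℕ) :
    (cycleVertex k m).val = if m < 2 * (k + 2) then m else 0 := by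
  unfold cycleVertex
  split_ifs <;> rfl

theorem graphB_neighborSet_cycleVertex_subset {k m : ℕ} (h₀ : 0 < m) (hm : m < 2 * (k + 2))
    (hk : m ≠ k + 2) :
    (graphB k).neighborSet (cycleVertex k m) ⊆
      {cycleVertex k (m - 1), cycleVertex k (m + 1)} := by
  intro b hb
  simp only [mem_neighborSet, graphB, fromRel_adj, val_cycleVertex] at hb
  simp only [mem_insert_iff, mem_singleton_iff, Fin.ext_iff, val_cycleVertex]
  have := b.isLt
  split_ifs at hb ⊢ <;> omega

theorem graphB_three_add_le_ncard {k : ℕ} {S : Set (Fin (2 * (k + 2)))}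
    (hS : ∀ a ∈ S, ∃ x ∈ S, ∃ y ∈ S, x ≠ y ∧ (graphB k).Adj a x ∧ (graphB k).Adj a y)
    (hne : S.Nonempty) : k + 3 ≤ S.ncard := by
  obtain ⟨w, hwS, hw₀, hwk⟩ : ∃ w ∈ S, w.val ≠ 0 ∧ w.val ≠ k + 2 := by
    obtain ⟨s, hs⟩ := hne
    obtain ⟨x, hx, y, hy, hxy, hsx, hsy⟩ := hS s hs
    -- `s` and its two neighbours are three distinct vertices of `S`
    by_contra! h
    have := h s hs; have := h x hx; have := h y hy
    have := Fin.val_ne_of_ne hxy; have := Fin.val_ne_of_ne hsx.ne; have := Fin.val_ne_of_ne hsy.ne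
    omega
  obtain ⟨lo, hi, hlo, hhi, harm⟩ : ∃ lo hi, lo < w.val ∧ w.val < hi ∧
      (lo = 0 ∧ hi = k + 2 ∨ lo = k + 2 ∧ hi = 2 * (k + 2)) := by
    rcases lt_or_gt_of_ne hwk with h | h
    exacts [⟨0, k + 2, by omega, h, by simp⟩, ⟨k + 2, 2 * (k + 2), h, w.isLt, by simp⟩]
  have hw : cycleVertex k w.val = w := by ext; simp [val_cycleVertex]
  have hsub : cycleVertex k '' Icc lo hi ⊆ S :=
    image_Icc_subset_of_neighborSet_subset hS (cycleVertex k)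
      (fun m h₁ h₂ => graphB_neighborSet_cycleVertex_subset (by omega) (by omega) (by omega))
      hlo hhi (by rwa [hw])
  have hinj : InjOn (cycleVertex k) (Icc lo hi) := by
    rintro m ⟨hm₁, hm₂⟩ m' ⟨hm₁', hm₂'⟩ h
    simp only [Fin.ext_iff, val_cycleVertex] at h
    split_ifs at h <;> omega
  calc k + 3 = (cycleVertex k '' Icc lo hi).ncard := by
        rw [hinj.ncard_image, Set.ncard_Icc_nat]; omega
    _ ≤ S.ncard := ncard_le_ncard hsub

theorem graphB_three_add_le_ncard_support {k : ℕ} {a : Fin (2 * (k + 2))}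
    {c : (graphB k).Walk a a} (hc : c.IsCycle) : k + 3 ≤ {z | z ∈ c.support}.ncard :=
  graphB_three_add_le_ncard (fun _ hw => hc.exists_ne_adj_of_mem_support hw)
    ⟨a, c.start_mem_support⟩

theorem graphA_adj_of_val_eq_succ {k : ℕ} {a b : Fin (2 * (k + 2))} (h : b.val = a.val + 1)
    (hb : b.val ≤ k + 1) : (graphA k).Adj a b := by
  rw [graphA, fromRel_adj]
  exact ⟨by rintro rfl; omega, Or.inl (Or.inl ⟨h, hb⟩)⟩

theorem graphB_no_cycle_closing_neighbor_graphA_has_general (k : ℕ) :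
    (∀ v : Fin (k + 1) → Fin (2 * (k + 2)),
        Function.Injective v → InducesConnected (graphB k) v →
        ¬ ∃ x, (graphB k).Adj (v (Fin.last k)) x ∧
            Function.Injective (Function.update v (Fin.last k) x) ∧
            InducesConnected (graphB k) (Function.update v (Fin.last k) x) ∧
            CoversCycle (graphB k)
              (Set.range (Function.update v (Fin.last k) x) ∪ {v (Fin.last k)})) ∧
    (∃ v : Fin (k + 1) → Fin (2 * (k + 2)),
        Function.Injective v ∧ InducesConnected (graphA k) v ∧
        ∃ x, (graphA k).Adj (v (Fin.last k)) x ∧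
          Function.Injective (Function.update v (Fin.last k) x)) := by
  refine ⟨?_, ?_⟩
  · rintro v hv - ⟨x, hadj, hinj, -, a, c, hc, hsupp⟩
    have hcard := ncard_range_update_union_singleton hv hadj.ne' hinj
    have hcycle := graphB_three_add_le_ncard_support hc
    rw [hsupp, hcard] at hcycle
    omega
  · let v : Fin (k + 1) → Fin (2 * (k + 2)) := Fin.castLE (by omega)
    have hx : (⟨k + 1, by omega⟩ : Fin (2 * (k + 2))) ∉ range v := by
      rintro ⟨i, hi⟩
      have := congrArg Fin.val hi
      simp only [Fin.val_castLE, v] at this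
      omega
    refine ⟨v, Fin.castLE_injective _, ?_, _, ?_,
      (Fin.castLE_injective _).update_of_notMem_range hx _⟩
    · exact induce_range_connected_of_adj_succ v
        fun i => graphA_adj_of_val_eq_succ (by simp [v]) (by simp [v])
    · exact graphA_adj_of_val_eq_succ (by simp [v]) le_rfl

/-- For `k ≥ 2`: in `B_{k+2}` no `(k+1)`-tuple with pairwise distinct
entries inducing a connected subgraph has a local `(k+1)`-neighbor with pairwise
distinct entries inducing a connected subgraph on `k+1` distinct vertices such that the
new tuple together with the replaced vertex covers a full cycle; in contrast, in
`A_{k+2}` some `(k+1)`-tuple with pairwise distinct entries inducing a connected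
subgraph has a local `(k+1)`-neighbor whose entries are pairwise distinct. -/
theorem graphB_no_cycle_closing_neighbor_graphA_has (k : ℕ) (hk : 2 ≤ k) :
    (∀ v : Fin (k + 1) → Fin (2 * (k + 2)),
        Function.Injective v → InducesConnected (graphB k) v →
        ¬ ∃ x, (graphB k).Adj (v (Fin.last k)) x ∧
            Function.Injective (Function.update v (Fin.last k) x) ∧
            InducesConnected (graphB k) (Function.update v (Fin.last k) x) ∧
            CoversCycle (graphB k)
              (Set.range (Function.update v (Fin.last k) x) ∪ {v (Fin.last k)})) ∧
    (∃ v : Fin (k + 1) → Fin (2 * (k + 2)),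
        Function.Injective v ∧ InducesConnected (graphA k) v ∧
        ∃ x, (graphA k).Adj (v (Fin.last k)) x ∧
          Function.Injective (Function.update v (Fin.last k) x)) :=
  graphB_no_cycle_closing_neighbor_graphA_has_general k
end

section
/- Let G = C_{2(k+2)} and H = C_{k+2} ⊔ C_{k+2} for k ≥ 2. The (2,2)-tuple graph of H (whose nodes are all pairs of vertices of H, since every 2-tuple induces at most 2 components) has exactly four connected components, whereas the (2,2)-tuple graph of G is connected. -/
open SimpleGraph

/-- The `(2,2)`-tuple graph of a graph `X`: its nodes are all ordered pairs of vertices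
of `X` (every `2`-tuple induces at most `2` components), and two pairs are adjacent if
one is obtained from the other by replacing one coordinate with a vertex adjacent to
the replaced vertex (the local neighbor relation). -/
def tupleGraph2 {V : Type*} (X : SimpleGraph V) : SimpleGraph (V × V) :=
  SimpleGraph.fromRel (fun p q =>
    (p.2 = q.2 ∧ X.Adj p.1 q.1) ∨ (p.1 = q.1 ∧ X.Adj p.2 q.2))

lemma tupleGraph2_eq_boxProd {V : Type*} (X : SimpleGraph V) :
    tupleGraph2 X = X □ X := by
  ext p q
  simp only [tupleGraph2, fromRel_adj, boxProd_adj]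
  constructor
  · rintro ⟨hne, (⟨h2, h1⟩ | ⟨h1, h2⟩) | (⟨h2, h1⟩ | ⟨h1, h2⟩)⟩
    · exact Or.inl ⟨h1, h2⟩
    · exact Or.inr ⟨h2, h1⟩
    · exact Or.inl ⟨h1.symm, h2.symm⟩
    · exact Or.inr ⟨h2.symm, h1.symm⟩
  · rintro (⟨h1, h2⟩ | ⟨h2, h1⟩)
    · exact ⟨fun h => h1.ne (congrArg Prod.fst h), Or.inl (Or.inl ⟨h2, h1⟩)⟩
    · exact ⟨fun h => h2.ne (congrArg Prod.snd h), Or.inl (Or.inr ⟨h1, h2⟩)⟩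

lemma boxProd_reachable {V W : Type*} {G : SimpleGraph V} {H : SimpleGraph W}
    (p q : V × W) :
    (G □ H).Reachable p q ↔ G.Reachable p.1 q.1 ∧ H.Reachable p.2 q.2 := by
  classical
  obtain ⟨a, b⟩ := p
  obtain ⟨c, d⟩ := q
  constructor
  · rintro ⟨w⟩
    exact ⟨⟨w.ofBoxProdLeft⟩, ⟨w.ofBoxProdRight⟩⟩
  · rintro ⟨⟨w1⟩, ⟨w2⟩⟩
    exact ⟨(w1.boxProdLeft H b).append (w2.boxProdRight G c)⟩

lemma sum_adj_isLeft {α β : Type*} {G : SimpleGraph α} {H : SimpleGraph β}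
    {u v : α ⊕ β} (h : (G ⊕g H).Adj u v) : u.isLeft = v.isLeft := by
  cases u <;> cases v <;> simp_all [SimpleGraph.sum]

lemma sum_reachable_isLeft {α β : Type*} {G : SimpleGraph α} {H : SimpleGraph β}
    {u v : α ⊕ β} (h : (G ⊕g H).Reachable u v) : u.isLeft = v.isLeft := by
  obtain ⟨w⟩ := h
  induction w with
  | nil => rfl
  | cons h _ ih => exact (sum_adj_isLeft h).trans ih

lemma sum_reachable_of_isLeft {α β : Type*} {G : SimpleGraph α} {H : SimpleGraph β}
    (hG : G.Preconnected) (hH : H.Preconnected)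
    {u v : α ⊕ β} (h : u.isLeft = v.isLeft) : (G ⊕g H).Reachable u v := by
  cases u <;> cases v <;> simp_all
  · exact (hG _ _).map (Embedding.sumInl (H := H)).toHom
  · exact (hH _ _).map (Embedding.sumInr (G := G)).toHom

/-- For `k ≥ 2`, the `(2,2)`-tuple graph of
`H = C_{k+2} ⊔ C_{k+2}` has exactly four connected components, whereas the
`(2,2)`-tuple graph of `G = C_{2(k+2)}` is connected. -/
theorem tupleGraph2_components (k : ℕ) (hk : 2 ≤ k) :
    Nat.card (tupleGraph2 (cycleGraph (k + 2) ⊕g cycleGraph (k + 2))).ConnectedComponent = 4 ∧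
    (tupleGraph2 (cycleGraph (2 * (k + 2)))).Connected := by
  constructor
  · set H := cycleGraph (k + 2) ⊕g cycleGraph (k + 2) with hH
    have hpre : (cycleGraph (k + 2)).Preconnected := cycleGraph_preconnected
    -- reachability characterization
    have hreach : ∀ p q : (Fin (k+2) ⊕ Fin (k+2)) × (Fin (k+2) ⊕ Fin (k+2)),
        (tupleGraph2 H).Reachable p q ↔ (p.1.isLeft = q.1.isLeft ∧ p.2.isLeft = q.2.isLeft) := by
      intro p q
      rw [tupleGraph2_eq_boxProd, boxProd_reachable]
      constructor
      · rintro ⟨h1, h2⟩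
        exact ⟨sum_reachable_isLeft h1, sum_reachable_isLeft h2⟩
      · rintro ⟨h1, h2⟩
        exact ⟨sum_reachable_of_isLeft hpre hpre h1, sum_reachable_of_isLeft hpre hpre h2⟩
    let f : (tupleGraph2 H).ConnectedComponent → Bool × Bool :=
      SimpleGraph.ConnectedComponent.lift (fun p => (p.1.isLeft, p.2.isLeft))
        (by
          intro v w p hp
          have := (hreach v w).mp ⟨p⟩
          simp [this.1, this.2])
    have hbij : Function.Bijective f := by
      constructor
      · intro c d
        refine SimpleGraph.ConnectedComponent.ind₂ (fun v w h => ?_) c d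
        simp only [f, SimpleGraph.ConnectedComponent.lift_mk, Prod.mk.injEq] at h
        exact SimpleGraph.ConnectedComponent.sound ((hreach v w).mpr h)
      · intro b
        refine ⟨(tupleGraph2 H).connectedComponentMk
          ((if b.1 then Sum.inl 0 else Sum.inr 0), (if b.2 then Sum.inl 0 else Sum.inr 0)), ?_⟩
        cases b with
        | mk b1 b2 => cases b1 <;> cases b2 <;> simp [f]
    rw [Nat.card_eq_of_bijective f hbij, Nat.card_eq_fintype_card]
    decide
  · rw [tupleGraph2_eq_boxProd]
    have : 2 * (k + 2) = (2 * k + 3) + 1 := by ring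
    rw [this]
    exact cycleGraph_connected.boxProd cycleGraph_connected
end

section
/- Two vertices (v,S) and (w,T) in distinct vertex clouds of the CFI-type graph G_k (or H_k) are at distance 2 if and only if v and w are adjacent in K (i.e., v ≠ w) and the edge e = {v,w} satisfies: e ∈ S ⇔ e ∈ T. -/
open SimpleGraph
open scoped Classical

noncomputable section

/-- The set of edges of the complete graph `K` on `Fin (k+1)` incident to `v`. -/
def edgesAt (k : ℕ) (v : Fin (k + 1)) : Finset (Sym2 (Fin (k + 1))) :=
  (⊤ : SimpleGraph (Fin (k + 1))).edgeFinset.filter (fun e => v ∈ e)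

/-- Carrier for CFI-type graphs over the complete graph on `k+1` vertices: vertex-cloud
candidates `(v, S)` and edge-cloud vertices `(e, b)` (`b = false` for `e⁰`, `b = true`
for `e¹`). -/
def CFIVert (k : ℕ) : Type :=
  (Fin (k + 1) × Finset (Sym2 (Fin (k + 1)))) ⊕ (Sym2 (Fin (k + 1)) × Bool)

/-- A vertex-cloud candidate `(v, S)` is valid for parity `p` if `S` consists of edges
incident to `v` and `S` has even cardinality exactly when `p v = true`. -/
def ValidCloud (k : ℕ) (p : Fin (k + 1) → Bool) (v : Fin (k + 1))
    (S : Finset (Sym2 (Fin (k + 1)))) : Prop :=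
  S ⊆ edgesAt k v ∧ (Even S.card ↔ p v = true)

/-- The CFI-type graph over the complete graph on `k+1` vertices, with cloud parities
prescribed by `p`: `e⁰` and `e¹` are adjacent for every edge `e` of `K`; a valid cloud
vertex `(v, S)` is adjacent to `e¹` if `v ∈ e` and `e ∈ S`, and to `e⁰` if `v ∈ e` and
`e ∉ S`. -/
def CFIGraph (k : ℕ) (p : Fin (k + 1) → Bool) : SimpleGraph (CFIVert k) :=
  SimpleGraph.fromRel (fun x y =>
    match x, y with
    | .inl (v, S), .inr (e, b) =>
        ValidCloud k p v S ∧ ¬ e.IsDiag ∧ v ∈ e ∧ (b = true ↔ e ∈ S)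
    | .inr (e, b), .inr (e', b') => e = e' ∧ ¬ e.IsDiag ∧ b ≠ b'
    | _, _ => False)

theorem SimpleGraph.dist_eq_two_iff {V : Type*} {G : SimpleGraph V} {u v : V} :
    G.dist u v = 2 ↔ u ≠ v ∧ ¬ G.Adj u v ∧ (G.commonNeighbors u v).Nonempty := by
  rw [SimpleGraph.dist, ENat.toNat_eq_iff two_ne_zero]
  exact edist_eq_two_iff

namespace CFIGraph

variable {k : ℕ} {p : Fin (k + 1) → Bool}

theorem adj_inl_inr_iff {v : Fin (k + 1)} {S : Finset (Sym2 (Fin (k + 1)))}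
    {e : Sym2 (Fin (k + 1))} {b : Bool} :
    (CFIGraph k p).Adj (.inl (v, S)) (.inr (e, b)) ↔
      ValidCloud k p v S ∧ ¬ e.IsDiag ∧ v ∈ e ∧ (b = true ↔ e ∈ S) :=
  ⟨fun h ↦ h.2.resolve_right id, fun h ↦ ⟨Sum.inl_ne_inr, .inl h⟩⟩

theorem not_adj_inl_inl (x y : Fin (k + 1) × Finset (Sym2 (Fin (k + 1)))) :
    ¬ (CFIGraph k p).Adj (.inl x) (.inl y) :=
  fun h ↦ h.2.elim id id

/-- A common neighbour must lie in the cloud of `s(v, w)`, the only edge containing `v` and `w`. -/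
theorem commonNeighbors_inl_inl_nonempty_iff {v w : Fin (k + 1)}
    {S T : Finset (Sym2 (Fin (k + 1)))} (hS : ValidCloud k p v S) (hT : ValidCloud k p w T)
    (hvw : v ≠ w) :
    ((CFIGraph k p).commonNeighbors (.inl (v, S)) (.inl (w, T))).Nonempty ↔
      (s(v, w) ∈ S ↔ s(v, w) ∈ T) := by
  constructor
  · rintro ⟨x | ⟨e, b⟩, hvS, hwT⟩
    · exact absurd hvS (not_adj_inl_inl (p := p) _ x)
    obtain ⟨-, -, hve, hbS⟩ := adj_inl_inr_iff.mp hvS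
    obtain ⟨-, -, hwe, hbT⟩ := adj_inl_inr_iff.mp hwT
    obtain rfl : e = s(v, w) := (Sym2.mem_and_mem_iff hvw).mp ⟨hve, hwe⟩
    exact hbS.symm.trans hbT
  · intro hST
    have hdiag : ¬ s(v, w).IsDiag := Sym2.mk_isDiag_iff.not.mpr hvw
    exact ⟨.inr (s(v, w), decide (s(v, w) ∈ S)),
      adj_inl_inr_iff.mpr ⟨hS, hdiag, Sym2.mem_mk_left v w, decide_eq_true_iff⟩,
      adj_inl_inr_iff.mpr ⟨hT, hdiag, Sym2.mem_mk_right v w, decide_eq_true_iff.trans hST⟩⟩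

end CFIGraph

/-- Two valid cloud vertices `(v, S)` and `(w, T)` in distinct vertex
clouds of a CFI-type graph (with arbitrary prescribed cloud parities `p`, covering both
`G_k` and `H_k`) are at distance exactly `2` if and only if `v ≠ w` (so that `v` and `w`
are adjacent in the complete graph `K`) and the edge `e = {v, w}` satisfies
`e ∈ S ↔ e ∈ T`. -/
theorem cfi_cloud_distance_two_iff (k : ℕ) (p : Fin (k + 1) → Bool)
    (v w : Fin (k + 1)) (S T : Finset (Sym2 (Fin (k + 1))))
    (hS : ValidCloud k p v S) (hT : ValidCloud k p w T) (hvw : v ≠ w) :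
    (CFIGraph k p).dist (Sum.inl (v, S)) (Sum.inl (w, T)) = 2 ↔
      (s(v, w) ∈ S ↔ s(v, w) ∈ T) := by
  refine SimpleGraph.dist_eq_two_iff.trans <|
    Iff.trans ?_ (CFIGraph.commonNeighbors_inl_inl_nonempty_iff hS hT hvw)
  exact ⟨fun h ↦ h.2.2, fun h ↦ ⟨fun hEq ↦ hvw (Prod.ext_iff.mp (Sum.inl_injective hEq)).1,
    CFIGraph.not_adj_inl_inl _ _, h⟩⟩

end
end

section
/- Let G be a graph with maximum degree at most d, and let k ≥ 2, s ∈ [k]. Every (k,s)-multiset (a multiset of k vertices inducing a subgraph with at most s components) can be obtained from some (k−1,s)-multiset T by adding a vertex u that is either equal to some element of T or adjacent to some element of T, provided the number of components does not decrease below the bound; consequently |S(G)^k_s| ≤ |S(G)^{k-1}_s| · (k−1) · (d+1). -/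
/-!
Removing one element from a `(k, s)`-multiset `m` gives a `(k - 1, s)`-multiset. If a vertex is
repeated in `m`, drop one copy: the induced subgraph does not change. Otherwise `m` has `k > s`
distinct vertices, so some component has two of them; a vertex `u` of that component at maximal
distance from a fixed vertex `a` has a neighbour, and it lies on no shortest path from `a`, so
deleting it splits no component. Every `(k, s)`-multiset is therefore `u ::ₘ T` with `T` a
`(k - 1, s)`-multiset and `u` in the closed neighbourhood of `T`, which has at most
`(k - 1)(d + 1)` vertices.
-/
open SimpleGraph

/-- `S(G)ᵏₛ`: the set of multisets of `k` vertices of `G` whose induced subgraph has at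
most `s` connected components. -/
noncomputable def KSMultisets {V : Type*} (G : SimpleGraph V) (k s : ℕ) :
    Set (Multiset V) :=
  {m | Multiset.card m = k ∧
    Nat.card (G.induce {x | x ∈ m}).ConnectedComponent ≤ s}

namespace SimpleGraph

variable {V W : Type*} {G : SimpleGraph V} {H : SimpleGraph W}

lemma Reachable.exists_walk_not_mem_support_of_dist_le {a u v : W} (hv : H.Reachable a v)
    (huv : u ≠ v) (hd : H.dist a v ≤ H.dist a u) : ∃ p : H.Walk a v, u ∉ p.support := by
  classical
  obtain ⟨p, hp⟩ := hv.exists_walk_length_eq_dist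
  refine ⟨p, fun hu => ?_⟩
  have := p.length_takeUntil_lt_length hu huv
  have := H.dist_le (p.takeUntil u hu)
  omega

/-- Within the component of `a`, join `x` and `y` through shortest paths from `a`; outside it,
walks never meet `u`. -/
lemma exists_walk_not_mem_support_of_forall_dist_le {a u x y : W} (hu : H.Reachable a u)
    (hmax : ∀ v, H.Reachable a v → H.dist a v ≤ H.dist a u) (hx : x ≠ u) (hy : y ≠ u)
    (hxy : H.Reachable x y) : ∃ p : H.Walk x y, u ∉ p.support := by
  classical
  by_cases hax : H.Reachable a x
  · have hay := hax.trans hxy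
    obtain ⟨p, hp⟩ := hax.exists_walk_not_mem_support_of_dist_le hx.symm (hmax x hax)
    obtain ⟨q, hq⟩ := hay.exists_walk_not_mem_support_of_dist_le hy.symm (hmax y hay)
    refine ⟨p.reverse.append q, ?_⟩
    simp [Walk.mem_support_append_iff, hp, hq]
  · obtain ⟨p⟩ := hxy
    exact ⟨p, fun hup => hax (hu.trans ⟨(p.takeUntil u hup).reverse⟩)⟩

lemma Walk.reachable_induce_diff_singleton {S : Set V} {u x y : S}
    (p : (G.induce S).Walk x y) (hu : u ∉ p.support) (hx : (x : V) ∈ S \ {(u : V)})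
    (hy : (y : V) ∈ S \ {(u : V)}) :
    (G.induce (S \ {(u : V)})).Reachable ⟨x, hx⟩ ⟨y, hy⟩ := by
  have hq : ∀ z ∈ (p.map (Embedding.induce S).toHom).support, z ∈ S \ {(u : V)} := by
    intro z hz
    rw [Walk.support_map, List.mem_map] at hz
    obtain ⟨z, hz, rfl⟩ := hz
    exact ⟨z.2, fun h => hu (Subtype.ext h ▸ hz)⟩
  exact ⟨(p.map _).induce _ hq⟩

lemma card_connectedComponent_induce_diff_singleton_le [Finite V] {S : Set V} (u : S)
    (hu : ∀ x y : S, x ≠ u → y ≠ u → (G.induce S).Reachable x y →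
      ∃ p : (G.induce S).Walk x y, u ∉ p.support) :
    Nat.card (G.induce (S \ {(u : V)})).ConnectedComponent ≤
      Nat.card (G.induce S).ConnectedComponent := by
  refine Nat.card_le_card_of_injective
    (ConnectedComponent.map (G.induceHomOfLE Set.sdiff_subset).toHom) ?_
  refine ConnectedComponent.ind₂ fun x y hxy => ?_
  rw [ConnectedComponent.map_mk, ConnectedComponent.map_mk, ConnectedComponent.eq] at hxy
  obtain ⟨p, hp⟩ := hu _ _ (fun h => x.2.2 (congrArg Subtype.val h : (x : V) = u))
    (fun h => y.2.2 (congrArg Subtype.val h : (y : V) = u)) hxy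
  exact ConnectedComponent.eq.2 (p.reachable_induce_diff_singleton hp x.2 y.2)

lemma exists_adj_and_card_connectedComponent_induce_diff_singleton_le [Finite V] {S : Set V}
    (hS : Nat.card (G.induce S).ConnectedComponent < Nat.card S) :
    ∃ u ∈ S, (∃ w ∈ S \ {u}, G.Adj w u) ∧
      Nat.card (G.induce (S \ {u})).ConnectedComponent ≤
        Nat.card (G.induce S).ConnectedComponent := by
  set H := G.induce S
  obtain ⟨a, b, hab, hne⟩ : ∃ a b : S, H.Reachable a b ∧ a ≠ b := by
    have : ¬ Function.Injective H.connectedComponentMk := fun hinj =>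
      (Nat.card_le_card_of_injective _ hinj).not_gt hS
    simpa [Function.Injective, ConnectedComponent.eq, and_comm] using this
  obtain ⟨u, hau, hmax⟩ := Set.exists_max_image {v | H.Reachable a v} (H.dist a)
    (Set.toFinite _) ⟨a, Reachable.refl a⟩
  have hua : u ≠ a := by
    rintro rfl
    simpa using (hab.pos_dist_of_ne hne).trans_le (hmax b hab)
  obtain ⟨w, huw, -⟩ := Walk.exists_eq_cons_of_ne hua (Classical.choice hau).reverse
  refine ⟨u, u.2, ⟨w, ⟨w.2, fun h => huw.ne (Subtype.ext h.symm)⟩, ?_⟩,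
    card_connectedComponent_induce_diff_singleton_le u fun x y hx hy hxy =>
      exists_walk_not_mem_support_of_forall_dist_le hau hmax hx hy hxy⟩
  simpa [H] using huw.symm

end SimpleGraph

namespace Multiset

variable {α : Type*}

lemma setOf_mem_erase_of_mem_erase [DecidableEq α] {m : Multiset α} {a : α}
    (ha : a ∈ m.erase a) : {x | x ∈ m.erase a} = {x | x ∈ m} := by
  ext x
  rcases eq_or_ne x a with rfl | hxa
  · simp [ha, mem_of_mem_erase ha]
  · simp [mem_erase_of_ne hxa]

lemma Nodup.setOf_mem_erase [DecidableEq α] {m : Multiset α} (hm : m.Nodup) (a : α) :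
    {x | x ∈ m.erase a} = {x | x ∈ m} \ {a} := by
  ext x
  simp [hm.mem_erase_iff, and_comm]

lemma Nodup.card_setOf_mem {m : Multiset α} (hm : m.Nodup) :
    Nat.card {x | x ∈ m} = card m := by
  classical
  have : {x | x ∈ m} = (m.toFinset : Set α) := by ext; simp
  rw [this, Nat.card_coe_set_eq, Set.ncard_coe_finset, toFinset_card_of_nodup hm]

lemma finite_setOf_card_eq [Finite α] (n : ℕ) : {m : Multiset α | card m = n}.Finite :=
  (Set.finite_range ((↑) : Sym α n → Multiset α)).subset fun m hm => ⟨⟨m, hm⟩, rfl⟩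

end Multiset

lemma Set.ncard_le_ncard_mul_of_subset_biUnion {α β : Type*} {A : Set α} {B : Set β}
    (hA : A.Finite) (f : α → Finset β) {c : ℕ} (hf : ∀ a ∈ A, (f a).card ≤ c)
    (hB : B ⊆ ⋃ a ∈ A, (f a : Set β)) : B.ncard ≤ A.ncard * c := by
  classical
  have hU : ⋃ a ∈ A, (f a : Set β) = ↑(hA.toFinset.biUnion f) := by simp
  calc B.ncard ≤ (hA.toFinset.biUnion f).card := by
        simpa using Set.ncard_le_ncard (hU ▸ hB) (Finset.finite_toSet _)
    _ ≤ hA.toFinset.card * c :=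
        Finset.card_biUnion_le_card_mul _ _ _ fun a ha => hf a (hA.mem_toFinset.1 ha)
    _ = A.ncard * c := by rw [Set.ncard_eq_toFinset_card _ hA]

namespace SimpleGraph

variable {V : Type*} (G : SimpleGraph V)

def closedNeighborFinset [Fintype V] [DecidableEq V] [DecidableRel G.Adj] (T : Multiset V) :
    Finset V :=
  T.toFinset.biUnion fun w => insert w (G.neighborFinset w)

variable [Fintype V] [DecidableEq V] [DecidableRel G.Adj]

lemma mem_closedNeighborFinset {T : Multiset V} {u : V} :
    u ∈ G.closedNeighborFinset T ↔ u ∈ T ∨ ∃ w ∈ T, G.Adj w u := by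
  simp only [closedNeighborFinset, Finset.mem_biUnion, Multiset.mem_toFinset, Finset.mem_insert,
    mem_neighborFinset]
  grind [G.adj_symm]

lemma card_closedNeighborFinset_le {d : ℕ} (hdeg : ∀ v, (G.neighborSet v).ncard ≤ d)
    (T : Multiset V) : (G.closedNeighborFinset T).card ≤ Multiset.card T * (d + 1) := by
  refine (Finset.card_biUnion_le_card_mul _ _ _ fun w _ => ?_).trans
    (Nat.mul_le_mul_right _ (Multiset.toFinset_card_le T))
  refine (Finset.card_insert_le _ _).trans (Nat.succ_le_succ ?_)
  rw [← Set.ncard_coe_finset, coe_neighborFinset]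
  exact hdeg w

end SimpleGraph

section KSMultisets

variable {V : Type*}

lemma ksMultisets_finite [Finite V] (G : SimpleGraph V) (k s : ℕ) :
    (KSMultisets G k s).Finite :=
  (Multiset.finite_setOf_card_eq k).subset fun _ hm => hm.1

lemma exists_erase_mem_ksMultisets [Finite V] [DecidableEq V] {G : SimpleGraph V} {k s : ℕ}
    {m : Multiset V}
    (hm : m ∈ KSMultisets G k s) (hsk : s < k) :
    ∃ u ∈ m, m.erase u ∈ KSMultisets G (k - 1) s ∧
      (u ∈ m.erase u ∨ ∃ w ∈ m.erase u, G.Adj w u) := by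
  obtain ⟨hcard, hcomp⟩ := hm
  have card_erase {u} (hu : u ∈ m) : Multiset.card (m.erase u) = k - 1 := by
    rw [Multiset.card_erase_of_mem hu, hcard, Nat.pred_eq_sub_one]
  by_cases hdup : m.Nodup
  · have hlt : Nat.card (G.induce {x | x ∈ m}).ConnectedComponent < Nat.card {x | x ∈ m} := by
      rw [hdup.card_setOf_mem, hcard]
      omega
    obtain ⟨u, hu, ⟨w, hw, hwu⟩, hle⟩ :=
      SimpleGraph.exists_adj_and_card_connectedComponent_induce_diff_singleton_le hlt
    rw [← hdup.setOf_mem_erase] at hw hle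
    exact ⟨u, hu, ⟨card_erase hu, hle.trans hcomp⟩, Or.inr ⟨w, hw, hwu⟩⟩
  · obtain ⟨u, t, rfl⟩ : ∃ u t, m = u ::ₘ u ::ₘ t := by
      simpa [Multiset.nodup_iff_ne_cons_cons] using hdup
    have hu : u ∈ (u ::ₘ u ::ₘ t).erase u := by simp
    refine ⟨u, by simp, ⟨card_erase (u := u) (by simp), ?_⟩, Or.inl hu⟩
    rwa [Multiset.setOf_mem_erase_of_mem_erase hu]

end KSMultisets

theorem ksMultisets_extension_and_card_bound_general {V : Type*} [Fintype V]
    (G : SimpleGraph V) (d k s : ℕ)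
    (hdeg : ∀ v : V, (G.neighborSet v).ncard ≤ d)
    (hk : 2 ≤ k) (hsk : s ≤ k - 1) :
    (∀ m ∈ KSMultisets G k s, ∃ T ∈ KSMultisets G (k - 1) s, ∃ u : V,
        m = u ::ₘ T ∧ (u ∈ T ∨ ∃ w ∈ T, G.Adj w u)) ∧
    (KSMultisets G k s).ncard ≤ (KSMultisets G (k - 1) s).ncard * (k - 1) * (d + 1) := by
  classical
  have extend : ∀ m ∈ KSMultisets G k s, ∃ T ∈ KSMultisets G (k - 1) s, ∃ u : V,
      m = u ::ₘ T ∧ (u ∈ T ∨ ∃ w ∈ T, G.Adj w u) := by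
    intro m hm
    obtain ⟨u, hum, hT, hu⟩ := exists_erase_mem_ksMultisets hm (by omega)
    exact ⟨m.erase u, hT, u, (Multiset.cons_erase hum).symm, hu⟩
  refine ⟨extend, (Set.ncard_le_ncard_mul_of_subset_biUnion (ksMultisets_finite G (k - 1) s)
    (fun T => (G.closedNeighborFinset T).image (· ::ₘ T)) (fun T hT => ?_)
    fun m hm => ?_).trans_eq (mul_assoc _ _ _).symm⟩
  · exact Finset.card_image_le.trans (hT.1 ▸ G.card_closedNeighborFinset_le hdeg T)
  · obtain ⟨T, hT, u, rfl, hu⟩ := extend m hm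
    simp only [Set.mem_iUnion, Finset.coe_image, Set.mem_image, Finset.mem_coe]
    exact ⟨T, hT, u, G.mem_closedNeighborFinset.2 hu, rfl⟩

/-- Let `G` have maximum degree at most `d`, `k ≥ 2` and
`s ∈ [k-1]` (so that the number of components never needs to drop below the bound).
Every `(k,s)`-multiset arises from some `(k-1,s)`-multiset `T` by adding a vertex `u`
which is equal or adjacent to some element of `T` (i.e. lies in the closed neighborhood
of `T`); consequently `|S(G)ᵏₛ| ≤ |S(G)ᵏ⁻¹ₛ| · (k-1) · (d+1)`. -/
theorem ksMultisets_extension_and_card_bound {V : Type*} [Fintype V]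
    (G : SimpleGraph V) (d k s : ℕ)
    (hdeg : ∀ v : V, (G.neighborSet v).ncard ≤ d)
    (hk : 2 ≤ k) (hs1 : 1 ≤ s) (hsk : s ≤ k - 1) :
    (∀ m ∈ KSMultisets G k s, ∃ T ∈ KSMultisets G (k - 1) s, ∃ u : V,
        m = u ::ₘ T ∧ (u ∈ T ∨ ∃ w ∈ T, G.Adj w u)) ∧
    (KSMultisets G k s).ncard ≤ (KSMultisets G (k - 1) s).ncard * (k - 1) * (d + 1) :=
  ksMultisets_extension_and_card_bound_general G d k s hdeg hk hsk
end
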